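/- The image of the monomorphism from the direct sum of the trivial representation and the standard representation into the defining Z-linear permutation representation of Sym(n) on Zⁿ, sending t to v_1+...+v_n and e_i to v_i − v_n, is exactly the subgroup of n-tuples of integers whose coordinate sum is divisible by n. -/

import Mathlib

set_option autoImplicit false

namespace TrivialPlusStandard

/-- `t ↦ v₀ + ⋯ + vₙ` on the trivial summand and `eᵢ ↦ vᵢ − vₙ` on the standard one. -/
def embedding (R : Type*) [Ring R] (n : ℕ) (p : R × (Fin n → R)) : Fin (n + 1) → R :=
  (fun _ => p.1) + ∑ i : Fin n, p.2 i • (Pi.single i.castSucc 1 - Pi.single (Fin.last n) 1)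

variable {R : Type*} [Ring R] {n : ℕ}

@[simp]
lemma embedding_castSucc (p : R × (Fin n → R)) (k : Fin n) :
    embedding R n p k.castSucc = p.1 + p.2 k := by
  simp [embedding, Finset.sum_apply, Pi.single_apply, (Fin.castSucc_lt_last k).ne]

@[simp]
lemma embedding_last (p : R × (Fin n → R)) :
    embedding R n p (Fin.last n) = p.1 - ∑ i, p.2 i := by
  simp [embedding, Finset.sum_apply, (Fin.castSucc_lt_last _).ne, sub_eq_add_neg]

lemma sum_embedding (p : R × (Fin n → R)) :
    ∑ j, embedding R n p j = ((n : R) + 1) * p.1 := by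
  simp only [Fin.sum_univ_castSucc, embedding_castSucc, embedding_last,
    Finset.sum_add_distrib, Finset.sum_const, Finset.card_univ, Fintype.card_fin, nsmul_eq_mul]
  noncomm_ring

lemma embedding_injective [IsAddTorsionFree R] : Function.Injective (embedding R n) := by
  rintro ⟨c, x⟩ ⟨c', x'⟩ h
  have hc : c = c' := by
    have hsum := congrArg (fun a => ∑ j, a j) h
    simp only [sum_embedding, ← Nat.cast_succ, ← nsmul_eq_mul] at hsum
    exact (nsmul_right_inj n.succ_ne_zero).mp hsum
  have hx : x = x' := funext fun k => by
    simpa [hc] using congrFun h k.castSucc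
  rw [hc, hx]

/-- A tuple with coordinate sum `(n + 1) c` is the image of `c` and the deviations
`aₖ − c` of its first `n` coordinates; the last coordinate then matches automatically. -/
lemma range_embedding :
    Set.range (embedding R n) = {a | ((n : R) + 1) ∣ ∑ j, a j} := by
  ext a
  constructor
  · rintro ⟨p, rfl⟩
    exact ⟨p.1, sum_embedding p⟩
  · rintro ⟨c, hc⟩
    refine ⟨(c, fun k => a k.castSucc - c), funext fun j => ?_⟩
    induction j using Fin.lastCases with
    | cast k => simp
    | last =>
      rw [Fin.sum_univ_castSucc] at hc
      simp only [embedding_last, Finset.sum_sub_distrib, Finset.sum_const, Finset.card_univ,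
        Fintype.card_fin, nsmul_eq_mul]
      rw [eq_sub_of_add_eq hc]
      noncomm_ring

end TrivialPlusStandard

open TrivialPlusStandard in
/-- **Image of `1 ⊕ (n−1)` inside the defining `ℤ`-linear permutation
representation.**
The map `ℤ × ℤⁿ → ℤ^{n+1}` sending `t` to `v₀ + ⋯ + vₙ` (the constant tuple) and
`eᵢ` to `vᵢ − vₙ` is injective, and its image is exactly the subgroup of
`(n+1)`-tuples of integers whose coordinate sum is divisible by `n+1`. -/
theorem trivial_plus_standard_image (n : ℕ) :
    Function.Injective (fun p : ℤ × (Fin n → ℤ) =>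
      (((fun _ => p.1) +
        ∑ i : Fin n, p.2 i •
          (Pi.single (Fin.castSucc i) (1 : ℤ) - Pi.single (Fin.last n) 1)) :
        Fin (n + 1) → ℤ)) ∧
    Set.range (fun p : ℤ × (Fin n → ℤ) =>
      (((fun _ => p.1) +
        ∑ i : Fin n, p.2 i •
          (Pi.single (Fin.castSucc i) (1 : ℤ) - Pi.single (Fin.last n) 1)) :
        Fin (n + 1) → ℤ)) =
      {a : Fin (n + 1) → ℤ | ((n : ℤ) + 1) ∣ ∑ j, a j} :=
  ⟨embedding_injective, range_embedding⟩
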